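/- Evolution of X from the evolution of B: let A be a linear operator, σ₂ Hermitian, γ skew-Hermitian, and suppose B(x,t) satisfies ∂B/∂t = i A ∂B/∂x as well as ∂/∂x (B σ₁) = −A B σ₂ − B γ. Then ∂/∂t [B(y,t) σ₂ B(y,t)*] = ∂/∂y [ i A B(y,t) σ₂ B(y,t)* − i B(y,t) σ₂ B(y,t)* A* + i B(y,t) γ B(y,t)* ]. Consequently, X(x,t) := X₀ + ∫₀ˣ B(y,t) σ₂ B(y,t)* dy + ∫₀ᵗ [ iA B(0,s) σ₂ B(0,s)* − i B(0,s) σ₂ B(0,s)* A* + i B(0,s) γ B(0,s)* ] ds satisfies both ∂X/∂x = B σ₂ B* and ∂X/∂t = iA B σ₂ B* − i B σ₂ B* A* + i B γ B*. -/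

import Mathlib

/-!
The hypotheses give `∂ₜB = iA ∂ₓB = iA(-ABσ₂ - Bγ)σ₁⁻¹`, a fixed bounded linear vector field
applied to `B`; hence `B(x, t) = exp(tL) B(x, 0)` is jointly continuous, although only separate
differentiability is assumed.

Expanding `∂ᵧR` and `∂ₜ(Bσ₂Bᴴ)`, their difference is `i(C Bₓᴴ - Bₓ Cᴴ)` with `C = ABσ₂ + Bγ`
(this uses `σ₂ᴴ = σ₂`, `γᴴ = -γ`). The second PDE says `C = -Bₓσ₁`, so both terms equal
`-Bₓσ₁Bₓᴴ` because `σ₁` is Hermitian.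

Then `∂ₓX = Bσ₂Bᴴ` is the fundamental theorem of calculus, and for `∂ₜX`, exchanging the order of
integration (Fubini, using joint continuity) turns `∫₀ˣ ∂ₜ(Bσ₂Bᴴ) dy = ∫₀ˣ ∂ᵧR dy` into
`∂ₜ ∫₀ˣ Bσ₂Bᴴ dy = R(x, t) - R(0, t)`.
-/

open Matrix MeasureTheory

attribute [local instance] Matrix.normedAddCommGroup Matrix.normedSpace

section MatrixCalculus

variable {𝕜 : Type*} [RCLike 𝕜] {l m n : Type*} [Fintype l] [Fintype m] [Fintype n]
  {x : ℝ}

theorem HasDerivAt.matrix_mul {f : ℝ → Matrix l m 𝕜} {g : ℝ → Matrix m n 𝕜}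
    {f' : Matrix l m 𝕜} {g' : Matrix m n 𝕜} (hf : HasDerivAt f f' x) (hg : HasDerivAt g g' x) :
    HasDerivAt (fun t => f t * g t) (f' * g x + f x * g') x := by
  rw [add_comm]
  exact (mulLinearMap ℝ).toContinuousBilinearMap.hasDerivAt_of_bilinear (fun _ => hf) fun _ => hg

theorem HasDerivAt.matrix_conjTranspose {f : ℝ → Matrix m n 𝕜} {f' : Matrix m n 𝕜}
    (hf : HasDerivAt f f' x) : HasDerivAt (fun t => (f t)ᴴ) f'ᴴ x :=
  let T : Matrix m n 𝕜 →ₗ[ℝ] Matrix n m 𝕜 :=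
    { toFun := conjTranspose
      map_add' := conjTranspose_add
      map_smul' := fun r M => by simp [conjTranspose_smul] }
  T.toContinuousLinearMap.hasFDerivAt.comp_hasDerivAt x hf

theorem HasDerivAt.matrix_mul_mul_conjTranspose {f : ℝ → Matrix m n 𝕜} {f' : Matrix m n 𝕜}
    (hf : HasDerivAt f f' x) (S : Matrix n n 𝕜) :
    HasDerivAt (fun t => f t * S * (f t)ᴴ) (f' * S * (f x)ᴴ + f x * S * f'ᴴ) x := by
  simpa using ((hf.matrix_mul (hasDerivAt_const x S)).matrix_mul hf.matrix_conjTranspose)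

end MatrixCalculus

section LinearFlow

variable {E : Type*} [NormedAddCommGroup E] [NormedSpace ℝ E] [CompleteSpace E]

theorem ContinuousLinearMap.eq_exp_smul_apply_of_hasDerivAt (L : E →L[ℝ] E) {b : ℝ → E}
    (hb : ∀ t, HasDerivAt b (L (b t)) t) (t : ℝ) :
    b t = NormedSpace.exp (t • L) (b 0) := by
  let : NormedAlgebra ℚ (E →L[ℝ] E) := NormedAlgebra.restrictScalars ℚ ℝ _
  have hderiv : ∀ s, HasDerivAt (fun s => NormedSpace.exp (s • -L) (b s)) 0 s := fun s => by
    simpa using (hasDerivAt_exp_smul_const (-L) s).clm_apply (hb s)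
  have hconst : NormedSpace.exp (t • -L) (b t) = b 0 := by
    simpa using is_const_of_deriv_eq_zero (fun s => (hderiv s).differentiableAt)
      (fun s => (hderiv s).deriv) t 0
  have hinv : NormedSpace.exp (t • L) * NormedSpace.exp (t • -L) = 1 := by
    rw [smul_neg, ← NormedSpace.exp_add_of_commute (Commute.refl _).neg_right, add_neg_cancel,
      NormedSpace.exp_zero]
  rw [← hconst]
  exact (congrArg (· (b t)) hinv).symm

theorem ContinuousLinearMap.continuous_uncurry_of_hasDerivAt (L : E →L[ℝ] E)
    {b : ℝ → ℝ → E} (hb : ∀ x t, HasDerivAt (b x) (L (b x t)) t)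
    (h0 : Continuous fun x => b x 0) : Continuous (Function.uncurry b) := by
  let : NormedAlgebra ℚ (E →L[ℝ] E) := NormedAlgebra.restrictScalars ℚ ℝ _
  have : Function.uncurry b = fun q => NormedSpace.exp (q.2 • L) (b q.1 0) :=
    funext fun q => L.eq_exp_smul_apply_of_hasDerivAt (hb q.1) q.2
  rw [this]
  exact (NormedSpace.exp_continuous.comp (continuous_snd.smul continuous_const)).clm_apply
    (h0.comp continuous_fst)

end LinearFlow

section Conservation

open intervalIntegral

variable {E : Type*} [NormedAddCommGroup E] [NormedSpace ℝ E] [CompleteSpace E]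

theorem hasDerivAt_intervalIntegral_of_conservation {F R P : ℝ → ℝ → E}
    (hF : ∀ y t, HasDerivAt (F y) (P y t) t) (hR : ∀ y t, HasDerivAt (R · t) (P y t) y)
    (hP : Continuous (Function.uncurry P)) (hF_cont : ∀ t, Continuous (F · t)) (a x t : ℝ) :
    HasDerivAt (fun s => ∫ y in a..x, F y s) (R x t - R a t) t := by
  have hPy : ∀ u, Continuous (P · u) := fun u => hP.comp (.prodMk_left u)
  have hPt : ∀ y, Continuous (P y) := fun y => hP.comp (.prodMk_right y)
  have hR_sub : ∀ u, ∫ y in a..x, P y u = R x u - R a u := fun u =>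
    integral_eq_sub_of_hasDerivAt (fun y _ => hR y u)
      ((hPy u).intervalIntegrable a x)
  have hF_sub : ∀ y s, F y s = F y 0 + ∫ u in 0..s, P y u := fun y s => by
    rw [integral_eq_sub_of_hasDerivAt (fun u _ => hF y u)
      ((hPt y).intervalIntegrable 0 s), add_sub_cancel]
  have hswap : ∀ s, ∫ y in a..x, ∫ u in 0..s, P y u = ∫ u in 0..s, ∫ y in a..x, P y u :=
    fun s => intervalIntegral_intervalIntegral_swap <|
      (hP.continuousOn.integrableOn_compact (isCompact_uIcc.prod isCompact_uIcc)).mono_set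
        (Set.prod_mono Set.uIoc_subset_uIcc Set.uIoc_subset_uIcc)
  have hsplit : ∀ s, ∫ y in a..x, F y s
      = (∫ y in a..x, F y 0) + ∫ u in 0..s, (R x u - R a u) := fun s => calc
    ∫ y in a..x, F y s = ∫ y in a..x, (F y 0 + ∫ u in 0..s, P y u) :=
      integral_congr fun y _ => hF_sub y s
    _ = (∫ y in a..x, F y 0) + ∫ y in a..x, ∫ u in 0..s, P y u :=
      integral_add ((hF_cont 0).intervalIntegrable a x)
        ((continuous_parametric_intervalIntegral_of_continuous' hP 0 s).intervalIntegrable a x)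
    _ = (∫ y in a..x, F y 0) + ∫ u in 0..s, (R x u - R a u) := by
      simp_rw [hswap, hR_sub]
  have hR_cont : Continuous fun u => R x u - R a u := by
    simp_rw [← hR_sub]
    exact continuous_parametric_intervalIntegral_of_continuous'
      (f := fun u y => P y u) (hP.comp continuous_swap) a x
  rw [funext hsplit]
  exact (hR_cont.integral_hasStrictDerivAt 0 t).hasDerivAt.const_add _

end Conservation

section Flux

variable {m k : Type*} [Fintype m] [Fintype k] {A : Matrix m m ℂ} {σ₁ σ₂ γ : Matrix k k ℂ}

def Matrix.flux (A : Matrix m m ℂ) (σ γ : Matrix k k ℂ) (M : Matrix m k ℂ) : Matrix m m ℂ :=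
  Complex.I • (A * (M * σ * Mᴴ)) - Complex.I • (M * σ * Mᴴ * Aᴴ) + Complex.I • (M * γ * Mᴴ)

theorem Matrix.mul_conjTranspose_comm_of_mul_eq {M N : Matrix m k ℂ} (hσ₁ : σ₁.IsHermitian)
    (hN : N * σ₁ = -(A * M * σ₂) - M * γ) :
    (A * M * σ₂ + M * γ) * Nᴴ = N * (A * M * σ₂ + M * γ)ᴴ := by
  have hC : A * M * σ₂ + M * γ = -(N * σ₁) := by rw [hN]; abel
  rw [hC, conjTranspose_neg, conjTranspose_mul, hσ₁.eq, Matrix.neg_mul, Matrix.mul_neg,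
    Matrix.mul_assoc]

theorem HasDerivAt.matrix_flux (hσ₁ : σ₁.IsHermitian) (hσ₂ : σ₂.IsHermitian) (hγ : γᴴ = -γ)
    {M : ℝ → Matrix m k ℂ} {N N' : Matrix m k ℂ} {y : ℝ} (hM : HasDerivAt M N y)
    (hN : N * σ₁ = -(A * M y * σ₂) - M y * γ) (hN' : N' = Complex.I • (A * N)) :
    HasDerivAt (fun z => flux A σ₂ γ (M z)) (N' * σ₂ * (M y)ᴴ + M y * σ₂ * N'ᴴ) y := by
  subst hN'
  have hF := hM.matrix_mul_mul_conjTranspose σ₂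
  refine (((((hasDerivAt_const y A).matrix_mul hF).const_smul Complex.I).sub
    ((hF.matrix_mul (hasDerivAt_const y Aᴴ)).const_smul Complex.I)).add
    ((hM.matrix_mul_mul_conjTranspose γ).const_smul Complex.I)).congr_deriv ?_
  have hcomm := mul_conjTranspose_comm_of_mul_eq hσ₁ hN
  simp only [conjTranspose_add, conjTranspose_mul, hσ₂.eq, hγ, Matrix.add_mul, Matrix.mul_add,
    Matrix.neg_mul, Matrix.mul_neg, Matrix.mul_assoc] at hcomm
  simp only [conjTranspose_smul, conjTranspose_mul, Complex.star_def, Complex.conj_I,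
    Matrix.zero_mul, Matrix.mul_zero, zero_add, add_zero, Matrix.add_mul, Matrix.mul_add,
    Matrix.smul_mul, Matrix.mul_smul, Matrix.mul_assoc, eq_sub_of_add_eq hcomm]
  module

variable [DecidableEq k]

theorem exists_clm_apply_eq_of_mul_eq (hσ₁ : IsUnit σ₁) :
    ∃ L : Matrix m k ℂ →L[ℝ] Matrix m k ℂ, ∀ M N : Matrix m k ℂ,
      N * σ₁ = -(A * M * σ₂) - M * γ → L M = Complex.I • (A * N) := by
  let f : Matrix m k ℂ →ₗ[ℂ] Matrix m k ℂ := -Complex.I • mulLeftLinearMap k ℂ A ∘ₗ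
    (mulLeftLinearMap k ℂ A ∘ₗ mulRightLinearMap m ℂ (σ₂ * σ₁⁻¹) + mulRightLinearMap m ℂ (γ * σ₁⁻¹))
  refine ⟨(f.restrictScalars ℝ).toContinuousLinearMap, fun M N hN => ?_⟩
  have hN' : N = (-(A * M * σ₂) - M * γ) * σ₁⁻¹ := by
    rw [← hN, Matrix.mul_nonsing_inv_cancel_right _ _ ((isUnit_iff_isUnit_det σ₁).mp hσ₁)]
  simp [f, hN', Matrix.mul_assoc, Matrix.add_mul, Matrix.mul_add, sub_eq_add_neg]

theorem continuous_uncurry_of_pde (hσ₁ : IsUnit σ₁) {B Bx Bt : ℝ → ℝ → Matrix m k ℂ}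
    (hBx : ∀ x t, HasDerivAt (B · t) (Bx x t) x) (hBt : ∀ x t, HasDerivAt (B x) (Bt x t) t)
    (hPDEt : ∀ x t, Bt x t = Complex.I • (A * Bx x t))
    (hPDEx : ∀ x t, Bx x t * σ₁ = -(A * B x t * σ₂) - B x t * γ) :
    Continuous (fun q : ℝ × ℝ => B q.1 q.2) ∧ Continuous (fun q : ℝ × ℝ => Bt q.1 q.2) := by
  obtain ⟨L, hL⟩ := exists_clm_apply_eq_of_mul_eq (A := A) (σ₂ := σ₂) (γ := γ) hσ₁
  have hBtL : ∀ x t, Bt x t = L (B x t) := fun x t =>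
    (hPDEt x t).trans (hL _ _ (hPDEx x t)).symm
  have hB : Continuous (fun q : ℝ × ℝ => B q.1 q.2) :=
    L.continuous_uncurry_of_hasDerivAt (fun x t => hBtL x t ▸ hBt x t)
      (continuous_iff_continuousAt.2 fun x => (hBx x 0).continuousAt)
  exact ⟨hB, by simp_rw [hBtL]; fun_prop⟩

end Flux

/-- Evolution of `X` from the evolution of `B`: if `∂B/∂t = iA ∂B/∂x` and
`∂/∂x(Bσ₁) = −ABσ₂ − Bγ`, then `∂/∂t (B σ₂ Bᴴ) = ∂/∂y R` where
`R = iA B σ₂ Bᴴ − i B σ₂ Bᴴ Aᴴ + i B γ Bᴴ`, and the explicitly integrated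
`X(x,t)` satisfies `∂X/∂x = B σ₂ Bᴴ` and `∂X/∂t = R`. -/
theorem stmt15 {n p : ℕ}
    (A : Matrix (Fin n) (Fin n) ℂ) (σ₁ σ₂ γ : Matrix (Fin p) (Fin p) ℂ)
    (hσ₁ : σ₁.IsHermitian) (hσ₁inv : IsUnit σ₁) (hσ₂ : σ₂.IsHermitian)
    (hγ : γᴴ = -γ)
    (B Bx Bt : ℝ → ℝ → Matrix (Fin n) (Fin p) ℂ)
    (hBx : ∀ x t : ℝ, HasDerivAt (fun ξ => B ξ t) (Bx x t) x)
    (hBt : ∀ x t : ℝ, HasDerivAt (fun s => B x s) (Bt x t) t)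
    (hPDEt : ∀ x t : ℝ, Bt x t = Complex.I • (A * Bx x t))
    (hPDEx : ∀ x t : ℝ, Bx x t * σ₁ = -(A * B x t * σ₂) - B x t * γ)
    (R : ℝ → ℝ → Matrix (Fin n) (Fin n) ℂ)
    (hR : ∀ x t : ℝ, R x t = Complex.I • (A * (B x t * σ₂ * (B x t)ᴴ))
        - Complex.I • (B x t * σ₂ * (B x t)ᴴ * Aᴴ)
        + Complex.I • (B x t * γ * (B x t)ᴴ))
    (X₀ : Matrix (Fin n) (Fin n) ℂ)
    (Xf : ℝ → ℝ → Matrix (Fin n) (Fin n) ℂ)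
    (hXf : ∀ x t : ℝ, Xf x t = X₀ + (∫ y in (0:ℝ)..x, B y t * σ₂ * (B y t)ᴴ)
        + ∫ s in (0:ℝ)..t, R 0 s) :
    (∀ y t : ℝ, HasDerivAt (fun s => B y s * σ₂ * (B y s)ᴴ)
        (deriv (fun z => R z t) y) t)
    ∧ (∀ x t : ℝ, HasDerivAt (fun ξ => Xf ξ t) (B x t * σ₂ * (B x t)ᴴ) x
        ∧ HasDerivAt (fun s => Xf x s) (R x t) t) := by
  obtain rfl : R = fun x t => flux A σ₂ γ (B x t) := funext₂ hR
  obtain ⟨hB, hBt_cont⟩ := continuous_uncurry_of_pde hσ₁inv hBx hBt hPDEt hPDEx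
  set P := fun y t => Bt y t * σ₂ * (B y t)ᴴ + B y t * σ₂ * (Bt y t)ᴴ
  have hP : Continuous (Function.uncurry P) := by unfold Function.uncurry P; fun_prop
  have hF_t : ∀ y t, HasDerivAt (fun s => B y s * σ₂ * (B y s)ᴴ) (P y t) t := fun y t =>
    (hBt y t).matrix_mul_mul_conjTranspose σ₂
  have hR_y : ∀ y t, HasDerivAt (fun z => flux A σ₂ γ (B z t)) (P y t) y := fun y t =>
    (hBx y t).matrix_flux hσ₁ hσ₂ hγ (hPDEx y t) (hPDEt y t)
  have hF_cont : ∀ t, Continuous fun y => B y t * σ₂ * (B y t)ᴴ := fun t => by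
    have := hB.comp (.prodMk_left t); fun_prop
  have hR_cont : Continuous fun s => flux A σ₂ γ (B 0 s) := by
    have := hB.comp (.prodMk_right 0); unfold flux; fun_prop
  refine ⟨fun y t => (hR_y y t).deriv ▸ hF_t y t, fun x t => ⟨?_, ?_⟩⟩
  · rw [funext (hXf · t)]
    exact (((hF_cont t).integral_hasStrictDerivAt 0 x).hasDerivAt.const_add X₀).add_const _
  · rw [funext (hXf x)]
    have := ((hasDerivAt_intervalIntegral_of_conservation hF_t hR_y hP hF_cont 0 x t).const_add
      X₀).add (hR_cont.integral_hasStrictDerivAt 0 t).hasDerivAt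
    rwa [sub_add_cancel] at this
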